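/- (Equilibrium integral identity, Lemma 1.3 and Lemma A.2.) For every γ ≥ 1 and every θ ∈ ℝ, the absolutely convergent improper integral (1/(4π))·∫₀^{2π} ln(M(0)(θ,θ'))·sin(θ'−θ) dθ' equals −(Ω_γ/2)·g_γ'(θ), where g_γ'(θ) = −(γ−γ⁻¹)·sin(2θ). Equivalently (since ∂²_{θθ'} sin(θ'−θ) = sin(θ'−θ)), (Ω_γ/2)·(d/dθ)g_γ(θ) + (1/(4π))·∫₀^{2π} ln(M(0)(θ,θ'))·∂²_{θθ'}sin(θ'−θ) dθ' = 0; that is, ξ = 0 is an equilibrium of the contour dynamics equation with angular velocity Ω_γ. -/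

import Mathlib

open Real MeasureTheory

/-- `Ω_γ := γ/(1+γ)²`. -/
noncomputable def OmG (γ : ℝ) : ℝ := γ / (1 + γ) ^ 2

/-- `g_γ(θ) := γ cos²θ + γ⁻¹ sin²θ`. -/
noncomputable def gell (γ θ : ℝ) : ℝ := γ * Real.cos θ ^ 2 + γ⁻¹ * Real.sin θ ^ 2

/-- `M(0)(θ,θ') := γ(cos θ − cos θ')² + γ⁻¹(sin θ − sin θ')²`. -/
noncomputable def M0 (γ θ θ' : ℝ) : ℝ :=
  γ * (Real.cos θ - Real.cos θ') ^ 2 + γ⁻¹ * (Real.sin θ - Real.sin θ') ^ 2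

/-!
Put `p = (γ + γ⁻¹) / 2` and `q = (γ - γ⁻¹) / 2`, so that `p ^ 2 = 1 + q ^ 2`. Writing `θ = a - b`,
`θ' = a + b` gives `M(0)(θ, θ') = (2 sin b) ^ 2 * (p - q cos 2a)`, so the logarithm splits into the
singular part `log ((2 sin ((θ' - θ) / 2)) ^ 2)`, whose product with `sin (θ' - θ)` is odd and
`2π`-periodic in `θ' - θ` and hence integrates to zero, and the smooth part
`log (p - q cos (θ + θ'))`.
Against `sin (θ' - θ)` the smooth part only sees the Fourier coefficient
`∫ log (p - q cos ψ) cos ψ dψ = -2π q / (p + 1)`, computed from an explicit antiderivative, and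
`q / (p + 1) = (γ - 1) / (γ + 1)` turns this into `-(Ω_γ / 2) g_γ'(θ)`.
-/

open Function

lemma Function.Periodic.intervalIntegral_eq_zero_of_odd {f : ℝ → ℝ} {T : ℝ}
    (hper : Periodic f T) (hodd : f.Odd) (a : ℝ) : ∫ x in a..a + T, f x = 0 := by
  rw [hper.intervalIntegral_add_eq a (-(T / 2)), show -(T / 2) + T = T / 2 by ring]
  have h := intervalIntegral.integral_comp_neg f (a := -(T / 2)) (b := T / 2)
  simp only [neg_neg, hodd.eq, intervalIntegral.integral_neg] at h
  linarith

/-- `log |e^{iu} - 1| ^ 2`; at `u ∈ 2πℤ` it takes the junk value `log 0 = 0`, which is harmless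
because it only occurs multiplied by `sin u`. -/
noncomputable def logChordSq (u : ℝ) : ℝ := log ((2 * sin (u / 2)) ^ 2)

lemma logChordSq_even : logChordSq.Even := by
  intro u
  simp only [logChordSq, neg_div, sin_neg, mul_neg, neg_sq]

lemma logChordSq_periodic : Periodic logChordSq (2 * π) := by
  intro u
  simp only [logChordSq, show (u + 2 * π) / 2 = u / 2 + π by ring, sin_add_pi, mul_neg, neg_sq]

lemma continuous_sin_mul_logChordSq : Continuous fun u => sin u * logChordSq u := by
  -- continuity of `x log x` at `0` handles the zeros of `sin (u / 2)`
  have h : (fun u => sin u * logChordSq u)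
      = fun u => cos (u / 2) * (2 * ((2 * sin (u / 2)) * log (2 * sin (u / 2)))) := by
    funext u
    have hsin : sin u = 2 * sin (u / 2) * cos (u / 2) := by
      rw [← sin_two_mul, mul_div_cancel₀ u two_ne_zero]
    rw [logChordSq, log_pow, hsin]
    push_cast
    ring
  rw [h]
  fun_prop

lemma integral_sin_mul_logChordSq (a : ℝ) :
    ∫ u in a..a + 2 * π, sin u * logChordSq u = 0 :=
  (sin_periodic.mul logChordSq_periodic).intervalIntegral_eq_zero_of_odd
    (fun u => by simp only [Pi.mul_apply, sin_neg, logChordSq_even.eq, neg_mul]) a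

section LogCos

variable {p q : ℝ}

lemma sub_mul_cos_pos (hp : 0 < p) (hpq : p ^ 2 = 1 + q ^ 2) (ψ : ℝ) : 0 < p - q * cos ψ := by
  nlinarith [abs_le.mp (abs_cos_le_one ψ), sq_nonneg (q * cos ψ + p), sq_nonneg (q * sin ψ),
    sin_sq_add_cos_sq ψ]

lemma continuous_log_sub_mul_cos (hp : 0 < p) (hpq : p ^ 2 = 1 + q ^ 2) :
    Continuous fun ψ => log (p - q * cos ψ) :=
  (continuous_const.sub (continuous_const.mul continuous_cos)).log
    fun ψ => (sub_mul_cos_pos hp hpq ψ).ne'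

/-- The half-angle substitution `t = tan (ψ / 2)`, with the arctangent shifted so that its argument
has no poles. -/
lemma hasDerivAt_add_two_mul_arctan (hp : 0 < p) (hpq : p ^ 2 = 1 + q ^ 2) (ψ : ℝ) :
    HasDerivAt (fun ψ => ψ + 2 * arctan (q * sin ψ / (1 + p - q * cos ψ)))
      (p - q * cos ψ)⁻¹ ψ := by
  have hD := sub_mul_cos_pos hp hpq ψ
  have hE : 0 < 1 + p - q * cos ψ := by linarith
  have hquot : HasDerivAt (fun ψ => q * sin ψ / (1 + p - q * cos ψ))
      ((q * cos ψ * (1 + p - q * cos ψ) - q * sin ψ * (q * sin ψ)) / (1 + p - q * cos ψ) ^ 2) ψ :=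
    ((hasDerivAt_sin ψ).const_mul q).div
      (by simpa using ((hasDerivAt_cos ψ).const_mul q).const_sub (1 + p)) hE.ne'
  refine ((hasDerivAt_id ψ).add
    ((hasDerivAt_arctan _).comp ψ hquot |>.const_mul 2)).congr_deriv ?_
  have hs := sin_sq_add_cos_sq ψ
  field_simp
  linear_combination (q ^ 3 * cos ψ - (p + 1) * q ^ 2) * hs + (p + 1 - q * cos ψ) * hpq

lemma hasDerivAt_antideriv_log_sub_mul_cos_mul_cos (hp : 0 < p) (hpq : p ^ 2 = 1 + q ^ 2)
    (hq : q ≠ 0) (ψ : ℝ) :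
    HasDerivAt (fun ψ => sin ψ * log (p - q * cos ψ) - sin ψ - p / q * ψ
        + (ψ + 2 * arctan (q * sin ψ / (1 + p - q * cos ψ))) / q)
      (log (p - q * cos ψ) * cos ψ) ψ := by
  have hD := sub_mul_cos_pos hp hpq ψ
  have hlog : HasDerivAt (fun ψ => log (p - q * cos ψ)) (q * sin ψ / (p - q * cos ψ)) ψ :=
    (by simpa using ((hasDerivAt_cos ψ).const_mul q).const_sub p :
      HasDerivAt _ (q * sin ψ) ψ).log hD.ne'
  refine ((((hasDerivAt_sin ψ).mul hlog).sub (hasDerivAt_sin ψ)).sub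
    ((hasDerivAt_id ψ).const_mul (p / q))).add
    ((hasDerivAt_add_two_mul_arctan hp hpq ψ).div_const q) |>.congr_deriv ?_
  have hs := sin_sq_add_cos_sq ψ
  set D := p - q * cos ψ with hD_def
  have hD' := hD.ne'
  field_simp
  linear_combination q ^ 2 * hs - hpq - (q * cos ψ + p) * hD_def

lemma integral_log_sub_mul_cos_mul_cos (hp : 0 < p) (hpq : p ^ 2 = 1 + q ^ 2) :
    ∫ ψ in (0:ℝ)..2 * π, log (p - q * cos ψ) * cos ψ = -(2 * π * q / (p + 1)) := by
  rcases eq_or_ne q 0 with rfl | hq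
  · simp [intervalIntegral.integral_const_mul]
  rw [intervalIntegral.integral_eq_sub_of_hasDerivAt
    (fun ψ _ => hasDerivAt_antideriv_log_sub_mul_cos_mul_cos hp hpq hq ψ)
    (((continuous_log_sub_mul_cos hp hpq).mul continuous_cos).intervalIntegrable _ _)]
  have hp1 : p + 1 ≠ 0 := by positivity
  simp only [sin_two_pi, cos_two_pi, sin_zero, cos_zero, mul_zero, zero_div, arctan_zero]
  field_simp
  linear_combination (-2 * π) * hpq

lemma integral_log_sub_mul_cos_mul_sin :
    ∫ ψ in (0:ℝ)..2 * π, log (p - q * cos ψ) * sin ψ = 0 := by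
  have hper : Periodic (fun ψ => log (p - q * cos ψ) * sin ψ) (2 * π) := fun ψ => by
    simp only [cos_add_two_pi, sin_add_two_pi]
  simpa using hper.intervalIntegral_eq_zero_of_odd
    (fun ψ => by simp only [cos_neg, sin_neg, mul_neg]) 0

lemma integral_log_sub_mul_cos_add_mul_sin_sub (hp : 0 < p) (hpq : p ^ 2 = 1 + q ^ 2) (θ : ℝ) :
    ∫ θ' in (0:ℝ)..2 * π, log (p - q * cos (θ + θ')) * sin (θ' - θ)
      = 2 * π * q / (p + 1) * sin (2 * θ) := by
  have hcont := continuous_log_sub_mul_cos hp hpq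
  have hsin : IntervalIntegrable (fun ψ => cos (2 * θ) * (log (p - q * cos ψ) * sin ψ))
      volume 0 (2 * π) :=
    ((hcont.mul continuous_sin).const_mul _).intervalIntegrable _ _
  have hcos : IntervalIntegrable (fun ψ => sin (2 * θ) * (log (p - q * cos ψ) * cos ψ))
      volume 0 (2 * π) :=
    ((hcont.mul continuous_cos).const_mul _).intervalIntegrable _ _
  have hper : Periodic (fun ψ => log (p - q * cos ψ) * sin (ψ - 2 * θ)) (2 * π) := fun ψ => by
    simp only [cos_add_two_pi, add_sub_right_comm, sin_add_two_pi]
  calc ∫ θ' in (0:ℝ)..2 * π, log (p - q * cos (θ + θ')) * sin (θ' - θ)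
      = ∫ ψ in θ..θ + 2 * π, log (p - q * cos ψ) * sin (ψ - 2 * θ) := by
        have h := intervalIntegral.integral_comp_add_left
          (fun ψ => log (p - q * cos ψ) * sin (ψ - 2 * θ)) θ (a := 0) (b := 2 * π)
        rw [add_zero] at h
        rw [← h]
        congr 1; ext θ'; rw [show θ + θ' - 2 * θ = θ' - θ by ring]
    _ = ∫ ψ in (0:ℝ)..2 * π, (cos (2 * θ) * (log (p - q * cos ψ) * sin ψ)
          - sin (2 * θ) * (log (p - q * cos ψ) * cos ψ)) := by
        rw [hper.intervalIntegral_add_eq θ 0, zero_add]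
        congr 1; ext ψ; rw [sin_sub]; ring
    _ = 2 * π * q / (p + 1) * sin (2 * θ) := by
        rw [intervalIntegral.integral_sub hsin hcos, intervalIntegral.integral_const_mul,
          intervalIntegral.integral_const_mul, integral_log_sub_mul_cos_mul_sin,
          integral_log_sub_mul_cos_mul_cos hp hpq]
        ring

end LogCos

lemma M0_eq (γ θ θ' : ℝ) :
    M0 γ θ θ' = (2 * sin ((θ' - θ) / 2)) ^ 2 * ((γ + γ⁻¹) / 2 - (γ - γ⁻¹) / 2 * cos (θ + θ')) := by
  obtain ⟨a, b, rfl, rfl⟩ : ∃ a b, θ = a - b ∧ θ' = a + b :=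
    ⟨(θ + θ') / 2, (θ' - θ) / 2, by ring, by ring⟩
  rw [M0, show (a + b - (a - b)) / 2 = b by ring, show a - b + (a + b) = 2 * a by ring,
    cos_sub, cos_add, sin_sub, sin_add, cos_two_mul]
  linear_combination 4 * γ * sin b ^ 2 * sin_sq_add_cos_sq a

lemma sq_add_inv_div_two {γ : ℝ} (hγ : γ ≠ 0) :
    ((γ + γ⁻¹) / 2) ^ 2 = 1 + ((γ - γ⁻¹) / 2) ^ 2 := by
  field_simp
  ring

lemma log_M0_mul_sin {γ : ℝ} (hγ : 0 < γ) (θ θ' : ℝ) :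
    log (M0 γ θ θ') * sin (θ' - θ) = sin (θ' - θ) * logChordSq (θ' - θ)
      + log ((γ + γ⁻¹) / 2 - (γ - γ⁻¹) / 2 * cos (θ + θ')) * sin (θ' - θ) := by
  have hpos := sub_mul_cos_pos (by positivity) (sq_add_inv_div_two hγ.ne') (θ + θ')
  rw [M0_eq, logChordSq]
  rcases eq_or_ne (sin ((θ' - θ) / 2)) 0 with h | h
  · have hsin : sin (θ' - θ) = 0 := by
      rw [← mul_div_cancel₀ (θ' - θ) two_ne_zero, sin_two_mul, h, mul_zero, zero_mul]
    simp [hsin]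
  · rw [log_mul (by positivity) hpos.ne']
    ring

lemma continuous_log_M0_mul_sin {γ : ℝ} (hγ : 0 < γ) (θ : ℝ) :
    Continuous fun θ' => log (M0 γ θ θ') * sin (θ' - θ) := by
  simp_rw [log_M0_mul_sin hγ θ]
  exact (continuous_sin_mul_logChordSq.comp (continuous_sub_right θ)).add
    (((continuous_log_sub_mul_cos (by positivity) (sq_add_inv_div_two hγ.ne')).comp
      (continuous_const_add θ)).mul (continuous_sin.comp (continuous_sub_right θ)))

lemma integral_log_M0_mul_sin {γ : ℝ} (hγ : 0 < γ) (θ : ℝ) :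
    ∫ θ' in (0:ℝ)..2 * π, log (M0 γ θ θ') * sin (θ' - θ)
      = 2 * π * ((γ - 1) / (γ + 1)) * sin (2 * θ) := by
  have hp : 0 < (γ + γ⁻¹) / 2 := by positivity
  have hpq := sq_add_inv_div_two hγ.ne'
  have hsing : Continuous fun θ' => sin (θ' - θ) * logChordSq (θ' - θ) :=
    continuous_sin_mul_logChordSq.comp (continuous_sub_right θ)
  have hreg : Continuous fun θ' =>
      log ((γ + γ⁻¹) / 2 - (γ - γ⁻¹) / 2 * cos (θ + θ')) * sin (θ' - θ) :=
    ((continuous_log_sub_mul_cos hp hpq).comp (continuous_const_add θ)).mul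
      (continuous_sin.comp (continuous_sub_right θ))
  simp_rw [log_M0_mul_sin hγ θ]
  rw [intervalIntegral.integral_add (hsing.intervalIntegrable _ _) (hreg.intervalIntegrable _ _),
    intervalIntegral.integral_comp_sub_right (fun u => sin u * logChordSq u),
    zero_sub, sub_eq_neg_add, integral_sin_mul_logChordSq,
    integral_log_sub_mul_cos_add_mul_sin_sub hp hpq]
  field_simp
  ring

lemma hasDerivAt_gell (γ θ : ℝ) : HasDerivAt (gell γ) (-(γ - γ⁻¹) * sin (2 * θ)) θ := by
  have h :=
    (((hasDerivAt_cos θ).pow 2).const_mul γ).add (((hasDerivAt_sin θ).pow 2).const_mul γ⁻¹)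
  refine h.congr_deriv ?_
  rw [sin_two_mul]
  push_cast
  ring

lemma deriv_deriv_sin_sub (θ θ' : ℝ) :
    deriv (fun a => deriv (fun b => sin (b - a)) θ') θ = sin (θ' - θ) := by
  have h (a : ℝ) : deriv (fun b => sin (b - a)) θ' = cos (θ' - a) := by simp
  simp_rw [h]
  simpa using (((hasDerivAt_id' θ).const_sub θ').cos).deriv

theorem equilibrium_identity (γ : ℝ) (hγ : 1 ≤ γ) (θ : ℝ) :
    -- the improper integral is absolutely convergent
    IntervalIntegrable (fun θ' => Real.log (M0 γ θ θ') * Real.sin (θ' - θ))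
      volume 0 (2 * π) ∧
    -- g_γ'(θ) = −(γ−γ⁻¹) sin(2θ)
    deriv (gell γ) θ = -(γ - γ⁻¹) * Real.sin (2 * θ) ∧
    -- value of the singular integral
    (1 / (4 * π)) * (∫ θ' in (0:ℝ)..(2 * π), Real.log (M0 γ θ θ') * Real.sin (θ' - θ))
      = -(OmG γ / 2) * deriv (gell γ) θ ∧
    -- equivalently, using ∂²_{θθ'} sin(θ'−θ)
    (OmG γ / 2) * deriv (gell γ) θ +
        (1 / (4 * π)) *
          (∫ θ' in (0:ℝ)..(2 * π),
            Real.log (M0 γ θ θ') *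
              deriv (fun a => deriv (fun b => Real.sin (b - a)) θ') θ)
      = 0 := by
  have hγ0 : 0 < γ := by linarith
  have hg := (hasDerivAt_gell γ θ).deriv
  have hI := integral_log_M0_mul_sin hγ0 θ
  simp_rw [deriv_deriv_sin_sub]
  refine ⟨(continuous_log_M0_mul_sin hγ0 θ).intervalIntegrable _ _, hg, ?_, ?_⟩ <;>
  · rw [hI, hg, OmG]
    field_simp
    ring
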